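/- Let Re μ < 1/2, ν ∈ (Re μ, 1/2), and suppose f : (0,∞) → ℂ satisfies ∫₀^∞ |f(x)| x^{-ν} dx < ∞. Define (Ff)(τ) = √π Γ(1+iτ-μ) Γ(1-iτ-μ) ∫₀^∞ P^μ_{iτ}(√(1+x)) P^μ_{-iτ}(√(1+x)) f(x)/√(1+x) dx. Then Ff is well-defined and bounded on (0,∞), and sup_{τ>0} |(Ff)(τ)| ≤ C_{μ,ν} ‖f‖_{1-ν,1}, where C_{μ,ν} = (2^{-2ν}/(π√π)) B(1-ν,1-ν) ∫_{ν-i∞}^{ν+i∞} |Γ(3/2-s)Γ(1/2-s)Γ(s-μ)/Γ(1-s-μ)| |ds| and ‖f‖_{1-ν,1} = ∫₀^∞ |f(x)| x^{-ν} dx. -/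

import Mathlib

/-!
On the contour `s = ν + it`, the inequality `|Γ(u)Γ(v)| ≤ |Γ(u+v)| B(Re u, Re v)` (from the
Beta integral) and Legendre's duplication formula bound the Mellin–Barnes integrand, uniformly
in `τ`, by `2^{1-2ν} π^{-1/2} B(1-ν,1-ν)` times `|Γ(3/2-s)Γ(1/2-s)Γ(s-μ)/Γ(1-s-μ)|`. This
majorant is integrable in `t`: the same Beta inequality, combined with
`|Γ(1/2+iu)|² = π / cosh πu`, squeezes `|Γ(σ+iu)|` between `e^{-π|u|/2}` divided and multiplied
by polynomials in `|u|`, so the majorant decays like a polynomial times `e^{-π|t|}`. Hence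
`|Φ(x,τ)| ≤ C_{μ,ν} x^{-ν}` for all `τ`, and integrating against `|f|` gives the bound.
-/

open MeasureTheory Set Complex

/-- The integrand of the Mellin–Barnes representation (1.4). -/
noncomputable def mbIntegrand (μ : ℂ) (τ : ℝ) (s : ℂ) : ℂ :=
  Complex.Gamma (1 - s + τ * Complex.I) * Complex.Gamma (1 - s - τ * Complex.I) *
    Complex.Gamma (1/2 - s) * Complex.Gamma (s - μ) /
    (Complex.Gamma (1 - s) * Complex.Gamma (1 - s - μ))

/-- The kernel Φ(x,τ) = √(π/(1+x)) Γ(1+iτ-μ)Γ(1-iτ-μ) P^μ_{iτ}(√(1+x)) P^μ_{-iτ}(√(1+x)),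
expressed via its Mellin–Barnes representation
Φ(x,τ) = (1/(2πi)) ∫_{ν-i∞}^{ν+i∞} mbIntegrand(s) x^{-s} ds (contour Re s = ν). -/
noncomputable def PhiMB (μ : ℂ) (ν : ℝ) (x τ : ℝ) : ℂ :=
  (1/(2*Real.pi)) * ∫ t : ℝ,
    mbIntegrand μ τ ((ν:ℂ) + t * Complex.I) * (x:ℂ) ^ (-((ν:ℂ) + t * Complex.I))

/-- The index transform (1.1), (Ff)(τ) = ∫₀^∞ Φ(x,τ) f(x) dx. -/
noncomputable def indexF (μ : ℂ) (ν : ℝ) (f : ℝ → ℂ) (τ : ℝ) : ℂ :=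
  ∫ x in Set.Ioi (0:ℝ), PhiMB μ ν x τ * f x

open Asymptotics Filter

@[fun_prop]
lemma Complex.measurable_Gamma : Measurable Gamma :=
  measurable_of_tendsto_metrizable (f := fun n s => GammaSeq s n)
    (fun n => by unfold GammaSeq; fun_prop)
    (tendsto_pi_nhds.2 fun s => GammaSeq_tendsto_Gamma s)

lemma Real.exp_abs_le_two_mul_cosh (x : ℝ) : Real.exp |x| ≤ 2 * Real.cosh x := by
  rw [← Real.cosh_abs, Real.cosh_eq]
  linarith [Real.exp_pos (-|x|)]

lemma Real.cosh_le_exp_abs (x : ℝ) : Real.cosh x ≤ Real.exp |x| := by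
  rw [← Real.cosh_abs, Real.cosh_eq]
  linarith [Real.exp_le_exp.2 (show -|x| ≤ |x| by linarith [abs_nonneg x])]

lemma exp_neg_pi_div_two_mul_abs_sq (u : ℝ) :
    Real.exp (-(Real.pi / 2) * |u|) ^ 2 = (Real.exp (Real.pi * |u|))⁻¹ := by
  rw [← Real.exp_nat_mul, ← Real.exp_neg]; ring_nf

section PolyExpWeight

noncomputable def polyExpWeight (k : ℕ) (c u : ℝ) : ℝ := (1 + |u|) ^ k * Real.exp (c * |u|)

lemma polyExpWeight_pos (k : ℕ) (c u : ℝ) : 0 < polyExpWeight k c u := by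
  unfold polyExpWeight; positivity

lemma norm_polyExpWeight (k : ℕ) (c u : ℝ) : ‖polyExpWeight k c u‖ = polyExpWeight k c u :=
  Real.norm_of_nonneg (polyExpWeight_pos k c u).le

@[simp]
lemma polyExpWeight_neg (k : ℕ) (c u : ℝ) : polyExpWeight k c (-u) = polyExpWeight k c u := by
  simp [polyExpWeight]

lemma polyExpWeight_mul (k l : ℕ) (c d u : ℝ) :
    polyExpWeight k c u * polyExpWeight l d u = polyExpWeight (k + l) (c + d) u := by
  simp only [polyExpWeight, pow_add, add_mul, Real.exp_add]; ring

lemma isBigO_polyExpWeight_comp_add_const (k : ℕ) (c a : ℝ) :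
    (fun u => polyExpWeight k c (u + a)) =O[⊤] polyExpWeight k c := by
  refine isBigO_top.2 ⟨(1 + |a|) ^ k * Real.exp (|c| * |a|), fun u => ?_⟩
  rw [norm_polyExpWeight, norm_polyExpWeight, polyExpWeight, polyExpWeight]
  have hbase : 1 + |u + a| ≤ (1 + |a|) * (1 + |u|) := by
    nlinarith [abs_add_le u a, abs_nonneg u, abs_nonneg a]
  have hexp : c * |u + a| ≤ |c| * |a| + c * |u| := by
    have h1 : |(|u + a| - |u|)| ≤ |a| := by
      simpa using abs_abs_sub_abs_le_abs_sub (u + a) u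
    have h2 : c * (|u + a| - |u|) ≤ |c| * |a| :=
      (le_abs_self _).trans (by rw [abs_mul]; gcongr)
    linarith
  calc (1 + |u + a|) ^ k * Real.exp (c * |u + a|)
      ≤ ((1 + |a|) * (1 + |u|)) ^ k * Real.exp (|c| * |a| + c * |u|) := by gcongr
    _ = _ := by rw [mul_pow, Real.exp_add]; ring

lemma integrable_polyExpWeight (k : ℕ) {c : ℝ} (hc : c < 0) :
    Integrable (polyExpWeight k c) := by
  set b := -c
  have hb : 0 < b := neg_pos.2 hc
  have hint : Integrable (fun u : ℝ => (1 + ‖u‖) ^ (-(2 : ℝ))) :=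
    integrable_one_add_norm (by norm_num)
  refine (hint.const_mul ((k + 2).factorial / b ^ (k + 2) * Real.exp b)).mono'
    (by unfold polyExpWeight; fun_prop) (.of_forall fun u => ?_)
  set y := 1 + |u|
  have hy : 0 < y := by positivity
  have hpow : y ^ (k + 2) ≤ (k + 2).factorial / b ^ (k + 2) * Real.exp (b * y) := by
    have := Real.pow_div_factorial_le_exp (b * y) (mul_nonneg hb.le hy.le) (k + 2)
    rw [mul_pow, div_le_iff₀ (by positivity)] at this
    rw [div_mul_eq_mul_div, le_div_iff₀ (by positivity)]
    linarith
  rw [norm_polyExpWeight, polyExpWeight, Real.norm_eq_abs, Real.rpow_neg hy.le, Real.rpow_two,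
    le_mul_inv_iff₀ (by positivity)]
  calc y ^ k * Real.exp (c * |u|) * y ^ 2 = y ^ (k + 2) * Real.exp (-(b * y)) * Real.exp b := by
        rw [mul_right_comm, ← pow_add, mul_assoc, ← Real.exp_add]
        congr 2
        simp only [b, y]; ring
    _ ≤ (k + 2).factorial / b ^ (k + 2) * Real.exp (b * y) * Real.exp (-(b * y)) *
        Real.exp b := by gcongr
    _ = _ := by
      rw [mul_assoc _ (Real.exp _), mul_assoc _ (Real.exp _), ← Real.exp_add, ← Real.exp_add]
      ring_nf

variable {k : ℕ} {c : ℝ} {g : ℝ → ℂ}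

lemma Asymptotics.IsBigO.polyExpWeight_comp_neg (h : g =O[⊤] polyExpWeight k c) :
    (fun u => g (-u)) =O[⊤] polyExpWeight k c :=
  (h.comp_tendsto tendsto_top).congr (fun _ => rfl) (polyExpWeight_neg k c)

lemma Asymptotics.IsBigO.polyExpWeight_comp_add_const (h : g =O[⊤] polyExpWeight k c) (a : ℝ) :
    (fun u => g (u + a)) =O[⊤] polyExpWeight k c :=
  (h.comp_tendsto tendsto_top).trans (isBigO_polyExpWeight_comp_add_const k c a)

end PolyExpWeight

namespace Complex

open ComplexConjugate

lemma norm_ofReal_cpow_le {x : ℝ} (hx : 0 ≤ x) (w : ℂ) : ‖(x : ℂ) ^ w‖ ≤ x ^ w.re := by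
  simpa [arg_ofReal_of_nonneg hx, abs_of_nonneg hx] using norm_cpow_le (x : ℂ) w

lemma norm_betaIntegral_le {u v : ℂ} (hu : 0 < u.re) (hv : 0 < v.re) :
    ‖betaIntegral u v‖ ≤ ProbabilityTheory.beta u.re v.re := by
  have hconv := betaIntegral_convergent (u := u.re) (v := v.re) (by simpa) (by simpa)
  rw [ProbabilityTheory.beta_eq_betaIntegralReal _ _ hu hv, betaIntegral, betaIntegral]
  refine (intervalIntegral.norm_integral_le_of_norm_le zero_le_one ?_
    ⟨hconv.1.re, hconv.2.re⟩).trans_eq (intervalIntegral.intervalIntegral_re hconv)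
  refine .of_forall fun x hx => ?_
  have hx1 : 0 ≤ 1 - x := by linarith [hx.2]
  have hpow : ∀ {y : ℝ}, 0 ≤ y → ∀ p : ℝ, (y : ℂ) ^ ((p : ℂ) - 1) = ((y ^ (p - 1) : ℝ) : ℂ) :=
    fun hy p => by rw [ofReal_cpow hy]; push_cast; rfl
  rw [show (1 : ℂ) - x = (1 - x : ℝ) by push_cast; rfl, hpow hx.1.le, hpow hx1, ← ofReal_mul,
    RCLike.re_eq_complex_re, ofReal_re, norm_mul]
  exact mul_le_mul (by simpa using norm_ofReal_cpow_le hx.1.le (u - 1))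
    (by simpa using norm_ofReal_cpow_le hx1 (v - 1)) (norm_nonneg _)
    (Real.rpow_nonneg hx.1.le _)

lemma norm_Gamma_mul_Gamma_le {u v : ℂ} (hu : 0 < u.re) (hv : 0 < v.re) :
    ‖Gamma u * Gamma v‖ ≤ ‖Gamma (u + v)‖ * ProbabilityTheory.beta u.re v.re := by
  rw [Gamma_mul_Gamma_eq_betaIntegral hu hv, norm_mul]
  exact mul_le_mul_of_nonneg_left (norm_betaIntegral_le hu hv) (norm_nonneg _)

lemma norm_Gamma_two_mul (z : ℂ) :
    ‖Gamma (2 * z)‖ =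
      2 ^ (2 * z.re - 1) / Real.sqrt Real.pi * ‖Gamma z‖ * ‖Gamma (z + 1 / 2)‖ := by
  have h := congrArg norm (Gamma_mul_Gamma_add_half z)
  have h2 : ‖(2 : ℂ) ^ (1 - 2 * z)‖ = (2 : ℝ) ^ (1 - 2 * z.re) := by
    simpa using norm_cpow_eq_rpow_re_of_pos two_pos (1 - 2 * z)
  rw [norm_mul, norm_mul, norm_mul, h2, norm_real, Real.norm_of_nonneg (Real.sqrt_nonneg _)] at h
  have hsplit : (2 : ℝ) ^ (2 * z.re - 1) * (2 : ℝ) ^ (1 - 2 * z.re) = 1 := by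
    rw [← Real.rpow_add two_pos]; norm_num
  have hπ : Real.sqrt Real.pi ≠ 0 := (Real.sqrt_pos.2 Real.pi_pos).ne'
  rw [mul_assoc, h, div_mul_eq_mul_div, eq_div_iff hπ]
  linear_combination -(‖Gamma (2 * z)‖ * Real.sqrt Real.pi) * hsplit

lemma norm_Gamma_add_nat_le {z : ℂ} (hz : 0 < z.re) (n : ℕ) :
    ‖Gamma (z + n)‖ ≤ (‖z‖ + n) ^ n * ‖Gamma z‖ := by
  induction n with
  | zero => simp
  | succ n ih =>
    have hne : z + n ≠ 0 := fun h => by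
      have := congrArg re h
      simp only [add_re, natCast_re, zero_re] at this
      linarith [n.cast_nonneg (α := ℝ)]
    have hzn : ‖z + n‖ ≤ ‖z‖ + (n + 1 : ℕ) := (norm_add_le _ _).trans (by simp)
    rw [Nat.cast_succ, ← add_assoc, Gamma_add_one _ hne, norm_mul, pow_succ', mul_assoc]
    gcongr
    refine ih.trans ?_
    gcongr
    simp

lemma norm_Gamma_one_half_add_mul_I_sq (u : ℝ) :
    ‖Gamma (1 / 2 + u * I)‖ ^ 2 = Real.pi / Real.cosh (Real.pi * u) := by
  have hconj : 1 - (1 / 2 + u * I) = conj (1 / 2 + u * I) := by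
    apply Complex.ext <;> norm_num
  have h := Gamma_mul_Gamma_one_sub (1 / 2 + u * I)
  rw [hconj, Gamma_conj, mul_conj, normSq_eq_norm_sq,
    show (Real.pi : ℂ) * (1 / 2 + u * I) = (Real.pi * u : ℝ) * I + Real.pi / 2 by
      push_cast; ring,
    sin_add_pi_div_two, cos_mul_I, ← ofReal_cosh, ← ofReal_div] at h
  exact_mod_cast h

lemma le_norm_Gamma_one_half_add_mul_I (u : ℝ) :
    Real.sqrt Real.pi * Real.exp (-(Real.pi / 2) * |u|) ≤ ‖Gamma (1 / 2 + u * I)‖ := by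
  refine le_of_pow_le_pow_left₀ two_ne_zero (norm_nonneg _) ?_
  rw [norm_Gamma_one_half_add_mul_I_sq, mul_pow, Real.sq_sqrt Real.pi_pos.le,
    exp_neg_pi_div_two_mul_abs_sq, ← div_eq_mul_inv]
  gcongr
  simpa [abs_mul, abs_of_pos Real.pi_pos] using Real.cosh_le_exp_abs (Real.pi * u)

lemma norm_Gamma_one_half_add_mul_I_le (u : ℝ) :
    ‖Gamma (1 / 2 + u * I)‖ ≤ Real.sqrt (2 * Real.pi) * Real.exp (-(Real.pi / 2) * |u|) := by
  refine le_of_pow_le_pow_left₀ two_ne_zero (by positivity) ?_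
  rw [norm_Gamma_one_half_add_mul_I_sq, mul_pow, Real.sq_sqrt (by positivity),
    exp_neg_pi_div_two_mul_abs_sq, div_le_iff₀ (Real.cosh_pos _)]
  have := Real.exp_abs_le_two_mul_cosh (Real.pi * u)
  rw [abs_mul, abs_of_pos Real.pi_pos] at this
  calc Real.pi
      = 2 * Real.pi * (Real.exp (Real.pi * |u|))⁻¹ * (Real.exp (Real.pi * |u|) / 2) := by
        field_simp
    _ ≤ _ := by gcongr; linarith

lemma isBigO_Gamma_verticalLine {σ : ℝ} (hσ : 0 < σ) :
    (fun u : ℝ => Gamma (σ + u * I)) =O[⊤] polyExpWeight ⌈σ⌉₊ (-(Real.pi / 2)) := by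
  set n := ⌈σ⌉₊
  set v : ℝ := n + 1 / 2 - σ with hv_def
  have hv : 0 < v := by linarith [Nat.le_ceil σ]
  have hΓv : 0 < Real.Gamma v := Real.Gamma_pos_of_pos hv
  refine isBigO_top.2 ⟨(n + 1) ^ n * Real.sqrt (2 * Real.pi) *
    ProbabilityTheory.beta σ v / Real.Gamma v, fun u => ?_⟩
  rw [norm_polyExpWeight, polyExpWeight, div_mul_eq_mul_div, le_div_iff₀ hΓv]
  -- Pairing with `Γ(v)` moves the line `Re = σ` to `Re = n + 1/2`, which the recursion
  -- `Γ(z + 1) = z Γ(z)` connects to the line `Re = 1/2`.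
  have hbeta := norm_Gamma_mul_Gamma_le (u := σ + u * I) (v := v) (by simpa) (by simpa)
  rw [norm_mul, Gamma_ofReal, norm_real, Real.norm_of_nonneg hΓv.le,
    show (σ : ℂ) + u * I + v = 1 / 2 + u * I + n by rw [hv_def]; push_cast; ring] at hbeta
  have hshift := norm_Gamma_add_nat_le (z := 1 / 2 + u * I) (by simp) n
  have hhalf := norm_Gamma_one_half_add_mul_I_le u
  have hnorm : ‖(1 / 2 : ℂ) + u * I‖ + n ≤ (n + 1) * (1 + |u|) := by
    have : ‖(1 / 2 : ℂ) + u * I‖ ≤ 1 / 2 + |u| := (norm_add_le _ _).trans (by simp)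
    nlinarith [abs_nonneg u, n.cast_nonneg (α := ℝ)]
  calc ‖Gamma (σ + u * I)‖ * Real.Gamma v
      ≤ ‖Gamma (1 / 2 + u * I + n)‖ * ProbabilityTheory.beta σ v := by simpa using hbeta
    _ ≤ ((n + 1) * (1 + |u|)) ^ n *
        (Real.sqrt (2 * Real.pi) * Real.exp (-(Real.pi / 2) * |u|)) *
        ProbabilityTheory.beta σ v := by
      gcongr
      · exact (ProbabilityTheory.beta_pos hσ hv).le
      refine hshift.trans ?_
      gcongr
    _ = _ := by rw [mul_pow]; ring

lemma le_norm_Gamma_verticalLine {σ : ℝ} (hσ : 0 < σ) (u : ℝ) :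
    Real.sqrt Real.pi * Real.Gamma (σ + 1 / 2) * Real.exp (-(Real.pi / 2) * |u|) ≤
      (σ + 1) * ProbabilityTheory.beta (1 / 2) (σ + 1 / 2) * (1 + |u|) *
        ‖Gamma (σ + u * I)‖ := by
  have hΓ : 0 < Real.Gamma (σ + 1 / 2) := Real.Gamma_pos_of_pos (by linarith)
  have hne : (σ : ℂ) + u * I ≠ 0 := fun h => by simpa [hσ.ne'] using congrArg re h
  have hbeta := norm_Gamma_mul_Gamma_le (u := 1 / 2 + u * I) (v := ((σ + 1 / 2 : ℝ) : ℂ))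
    (by simp) (by simp; linarith)
  rw [norm_mul, Gamma_ofReal, norm_real, Real.norm_of_nonneg hΓ.le,
    show 1 / 2 + u * I + ((σ + 1 / 2 : ℝ) : ℂ) = σ + u * I + 1 by push_cast; ring,
    Gamma_add_one _ hne, norm_mul, ofReal_re,
    show (1 / 2 + u * I : ℂ).re = 1 / 2 by simp] at hbeta
  have hnorm : ‖(σ : ℂ) + u * I‖ ≤ (σ + 1) * (1 + |u|) := by
    have : ‖(σ : ℂ) + u * I‖ ≤ σ + |u| := (norm_add_le _ _).trans (by simp [abs_of_pos hσ])
    nlinarith [abs_nonneg u]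
  have hB := ProbabilityTheory.beta_pos (show (0 : ℝ) < 1 / 2 by norm_num)
    (show 0 < σ + 1 / 2 by linarith)
  calc Real.sqrt Real.pi * Real.Gamma (σ + 1 / 2) * Real.exp (-(Real.pi / 2) * |u|)
      ≤ ‖Gamma (1 / 2 + u * I)‖ * Real.Gamma (σ + 1 / 2) := by
        rw [mul_right_comm]; gcongr; exact le_norm_Gamma_one_half_add_mul_I u
    _ ≤ ‖(σ : ℂ) + u * I‖ * ‖Gamma (σ + u * I)‖ *
        ProbabilityTheory.beta (1 / 2) (σ + 1 / 2) := hbeta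
    _ ≤ ((σ + 1) * (1 + |u|)) * ‖Gamma (σ + u * I)‖ *
        ProbabilityTheory.beta (1 / 2) (σ + 1 / 2) := by gcongr
    _ = _ := by ring

lemma isBigO_inv_Gamma_verticalLine {σ : ℝ} (hσ : 0 < σ) :
    (fun u : ℝ => (Gamma (σ + u * I))⁻¹) =O[⊤] polyExpWeight 1 (Real.pi / 2) := by
  have hden : 0 < Real.sqrt Real.pi * Real.Gamma (σ + 1 / 2) :=
    mul_pos (Real.sqrt_pos.2 Real.pi_pos) (Real.Gamma_pos_of_pos (by linarith))
  refine isBigO_top.2 ⟨(σ + 1) * ProbabilityTheory.beta (1 / 2) (σ + 1 / 2) /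
    (Real.sqrt Real.pi * Real.Gamma (σ + 1 / 2)), fun u => ?_⟩
  have hpos : 0 < ‖Gamma (σ + u * I)‖ := norm_pos_iff.2 (Gamma_ne_zero_of_re_pos (by simpa))
  rw [norm_inv, norm_polyExpWeight, polyExpWeight, pow_one, inv_le_iff_one_le_mul₀ hpos]
  calc (1 : ℝ) = Real.exp (Real.pi / 2 * |u|) * Real.exp (-(Real.pi / 2) * |u|) := by
        rw [← Real.exp_add, neg_mul, add_neg_cancel, Real.exp_zero]
    _ ≤ Real.exp (Real.pi / 2 * |u|) * ((σ + 1) * ProbabilityTheory.beta (1 / 2) (σ + 1 / 2) *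
        (1 + |u|) * ‖Gamma (σ + u * I)‖ / (Real.sqrt Real.pi * Real.Gamma (σ + 1 / 2))) := by
      gcongr
      rw [le_div_iff₀ hden]
      linarith [le_norm_Gamma_verticalLine hσ u]
    _ = _ := by ring

end Complex

section WeightedBound

variable {α 𝕜 : Type*} [MeasurableSpace α] [RCLike 𝕜] {m : Measure α} {K f : α → 𝕜}
  {w : α → ℝ} {A : ℝ}

lemma integrable_mul_of_norm_le_mul (hK : AEStronglyMeasurable K m)
    (hf : AEStronglyMeasurable f m) (hfw : Integrable (fun x => ‖f x‖ * w x) m)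
    (hKw : ∀ᵐ x ∂m, ‖K x‖ ≤ A * w x) : Integrable (fun x => K x * f x) m :=
  (hfw.const_mul A).mono' (hK.mul hf) <| hKw.mono fun x hx => by
    rw [norm_mul, ← mul_assoc, mul_right_comm]
    exact mul_le_mul_of_nonneg_right hx (norm_nonneg _)

lemma norm_integral_mul_le_of_norm_le_mul (hfw : Integrable (fun x => ‖f x‖ * w x) m)
    (hKw : ∀ᵐ x ∂m, ‖K x‖ ≤ A * w x) :
    ‖∫ x, K x * f x ∂m‖ ≤ A * ∫ x, ‖f x‖ * w x ∂m := by
  rw [← integral_const_mul]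
  refine norm_integral_le_of_norm_le (hfw.const_mul A) <| hKw.mono fun x hx => ?_
  rw [norm_mul, ← mul_assoc, mul_right_comm]
  exact mul_le_mul_of_nonneg_right hx (norm_nonneg _)

end WeightedBound

/-- The integrand of the constant `C_{μ,ν}`. -/
noncomputable def mbMajorant (μ : ℂ) (ν t : ℝ) : ℝ :=
  ‖Gamma (3 / 2 - ((ν : ℂ) + t * I)) * Gamma (1 / 2 - ((ν : ℂ) + t * I)) *
    Gamma (((ν : ℂ) + t * I) - μ) / Gamma (1 - ((ν : ℂ) + t * I) - μ)‖

lemma norm_mbIntegrand_le {μ : ℂ} {ν : ℝ} (hν : ν < 1 / 2) (τ t : ℝ) :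
    ‖mbIntegrand μ τ (ν + t * I)‖ ≤
      2 ^ (1 - 2 * ν) / Real.sqrt Real.pi * ProbabilityTheory.beta (1 - ν) (1 - ν) *
        mbMajorant μ ν t := by
  set s : ℂ := ν + t * I
  have hre : (1 - s).re = 1 - ν := by simp [s]
  have hΓ : ‖Gamma (1 - s)‖ ≠ 0 :=
    norm_ne_zero_iff.2 (Gamma_ne_zero_of_re_pos (by rw [hre]; linarith))
  -- `Γ(1-s+iτ) Γ(1-s-iτ)` is at most `|Γ(2-2s)| B(1-ν,1-ν)` whatever `τ` is, and the
  -- duplication formula trades `Γ(2-2s)` for `Γ(1-s) Γ(3/2-s)`.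
  have hpair := norm_Gamma_mul_Gamma_le (u := 1 - s + τ * I) (v := 1 - s - τ * I)
    (by simp [s]; linarith) (by simp [s]; linarith)
  rw [show 1 - s + τ * I + (1 - s - τ * I) = 2 * (1 - s) by ring, norm_Gamma_two_mul, hre,
    show 2 * (1 - ν) - 1 = 1 - 2 * ν by ring, show 1 - s + 1 / 2 = 3 / 2 - s by ring,
    show (1 - s + τ * I).re = 1 - ν by simp [s], show (1 - s - τ * I).re = 1 - ν by simp [s],
    norm_mul] at hpair
  have hnorm : ‖mbIntegrand μ τ s‖ = ‖Gamma (1 - s + τ * I)‖ * ‖Gamma (1 - s - τ * I)‖ *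
      (‖Gamma (1 / 2 - s)‖ * ‖Gamma (s - μ)‖) / (‖Gamma (1 - s)‖ * ‖Gamma (1 - s - μ)‖) := by
    simp only [mbIntegrand, norm_div, norm_mul]; ring
  have hmaj : mbMajorant μ ν t = ‖Gamma (3 / 2 - s)‖ * ‖Gamma (1 / 2 - s)‖ * ‖Gamma (s - μ)‖ /
      ‖Gamma (1 - s - μ)‖ := by
    simp only [mbMajorant, norm_div, norm_mul, s]
  rw [hnorm, hmaj]
  calc _ ≤ 2 ^ (1 - 2 * ν) / Real.sqrt Real.pi * ‖Gamma (1 - s)‖ * ‖Gamma (3 / 2 - s)‖ *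
          ProbabilityTheory.beta (1 - ν) (1 - ν) * (‖Gamma (1 / 2 - s)‖ * ‖Gamma (s - μ)‖) /
        (‖Gamma (1 - s)‖ * ‖Gamma (1 - s - μ)‖) := by gcongr
    _ = _ := by field_simp

lemma integrable_mbMajorant {μ : ℂ} {ν : ℝ} (hμν : μ.re < ν) (hν : ν < 1 / 2) :
    Integrable (mbMajorant μ ν) := by
  have h1 := (isBigO_Gamma_verticalLine (σ := 3 / 2 - ν) (by linarith)).polyExpWeight_comp_neg
  have h2 := (isBigO_Gamma_verticalLine (σ := 1 / 2 - ν) (by linarith)).polyExpWeight_comp_neg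
  have h3 := (isBigO_Gamma_verticalLine (σ := ν - μ.re) (by linarith)).polyExpWeight_comp_add_const
    (-μ.im)
  have h4 := (isBigO_inv_Gamma_verticalLine (σ := 1 - ν - μ.re)
    (by linarith)).polyExpWeight_comp_neg.polyExpWeight_comp_add_const μ.im
  refine ((((h1.mul h2).mul h3).mul h4).norm_left.congr (fun t => ?_) (fun t => ?_)).integrable
    (by unfold mbMajorant; fun_prop : Measurable _).aestronglyMeasurable
    (integrable_polyExpWeight (⌈3 / 2 - ν⌉₊ + ⌈1 / 2 - ν⌉₊ + ⌈ν - μ.re⌉₊ + 1)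
      (c := -(Real.pi / 2) + -(Real.pi / 2) + -(Real.pi / 2) + Real.pi / 2)
      (by linarith [Real.pi_pos]))
  · simp only [mbMajorant, div_eq_mul_inv]
    congr <;> apply Complex.ext <;> simp <;> ring
  · simp only [polyExpWeight_mul]

lemma stronglyMeasurable_PhiMB (μ : ℂ) (ν τ : ℝ) :
    StronglyMeasurable (fun x => PhiMB μ ν x τ) := by
  refine (StronglyMeasurable.integral_prod_right' (f := fun p : ℝ × ℝ =>
    mbIntegrand μ τ ((ν : ℂ) + p.2 * I) * (p.1 : ℂ) ^ (-((ν : ℂ) + p.2 * I))) ?_).const_mul _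
  unfold mbIntegrand
  exact Measurable.stronglyMeasurable (by fun_prop)

lemma norm_PhiMB_le {μ : ℂ} {ν : ℝ} (hμν : μ.re < ν) (hν : ν < 1 / 2) (τ : ℝ) {x : ℝ}
    (hx : 0 < x) :
    ‖PhiMB μ ν x τ‖ ≤ 2 ^ (-(2 * ν)) / (Real.pi * Real.sqrt Real.pi) *
      ProbabilityTheory.beta (1 - ν) (1 - ν) * (∫ t, mbMajorant μ ν t) * x ^ (-ν) := by
  set K := 2 ^ (1 - 2 * ν) / Real.sqrt Real.pi * ProbabilityTheory.beta (1 - ν) (1 - ν)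
  have hline : ‖∫ t : ℝ, mbIntegrand μ τ (ν + t * I) * (x : ℂ) ^ (-((ν : ℂ) + t * I))‖ ≤
      ∫ t, K * mbMajorant μ ν t * x ^ (-ν) := by
    refine norm_integral_le_of_norm_le
      (((integrable_mbMajorant hμν hν).const_mul K).mul_const _) (.of_forall fun t => ?_)
    rw [norm_mul, norm_cpow_eq_rpow_re_of_pos hx]
    simpa using mul_le_mul_of_nonneg_right (norm_mbIntegrand_le hν τ t)
      (Real.rpow_nonneg hx.le (-ν))
  rw [integral_mul_const, integral_const_mul] at hline
  have hsplit : (2 : ℝ) ^ (1 - 2 * ν) = 2 * 2 ^ (-(2 * ν)) := by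
    rw [sub_eq_add_neg, Real.rpow_add two_pos, Real.rpow_one]
  calc ‖PhiMB μ ν x τ‖
      ≤ 1 / (2 * Real.pi) * (K * (∫ t, mbMajorant μ ν t) * x ^ (-ν)) := by
        rw [PhiMB, norm_mul]
        gcongr
        simp [abs_of_pos Real.pi_pos]
    _ = _ := by
      simp only [K, hsplit]
      field_simp

theorem indexF_bounded_general (μ : ℂ) (ν : ℝ) (hν : ν ∈ Set.Ioo μ.re (1/2 : ℝ))
    (f : ℝ → ℂ) (hfm : AEStronglyMeasurable f (volume.restrict (Set.Ioi 0)))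
    (hf : IntegrableOn (fun x : ℝ => ‖f x‖ * x ^ (-ν)) (Set.Ioi 0)) :
    (∀ τ > (0:ℝ), IntegrableOn (fun x : ℝ => PhiMB μ ν x τ * f x) (Set.Ioi 0)) ∧
    ∀ τ > (0:ℝ), ‖indexF μ ν f τ‖ ≤
      ((2:ℝ) ^ (-(2*ν)) / (Real.pi * Real.sqrt Real.pi)) *
        (Real.Gamma (1-ν) * Real.Gamma (1-ν) / Real.Gamma ((1-ν) + (1-ν))) *
        (∫ t : ℝ, ‖Complex.Gamma (3/2 - ((ν:ℂ) + t * Complex.I)) *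
            Complex.Gamma (1/2 - ((ν:ℂ) + t * Complex.I)) *
            Complex.Gamma (((ν:ℂ) + t * Complex.I) - μ) /
            Complex.Gamma (1 - ((ν:ℂ) + t * Complex.I) - μ)‖) *
        (∫ x in Set.Ioi (0:ℝ), ‖f x‖ * x ^ (-ν)) := by
  obtain ⟨hμν, hν⟩ := hν
  have hΦ (τ : ℝ) : ∀ᵐ x ∂(volume.restrict (Ioi 0)), ‖PhiMB μ ν x τ‖ ≤
      2 ^ (-(2 * ν)) / (Real.pi * Real.sqrt Real.pi) * ProbabilityTheory.beta (1 - ν) (1 - ν) *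
        (∫ t, mbMajorant μ ν t) * x ^ (-ν) :=
    (ae_restrict_iff' measurableSet_Ioi).2 (.of_forall fun _ hx => norm_PhiMB_le hμν hν τ hx)
  exact ⟨fun τ _ => integrable_mul_of_norm_le_mul
      (stronglyMeasurable_PhiMB μ ν τ).aestronglyMeasurable hfm hf (hΦ τ),
    fun τ _ => norm_integral_mul_le_of_norm_le_mul hf (hΦ τ)⟩

/-- for Re μ < 1/2, ν ∈ (Re μ, 1/2) and f with ∫₀^∞ |f(x)| x^{-ν} dx < ∞,
the index transform Ff is well defined (the defining integral converges absolutely for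
each τ > 0) and sup_{τ>0} |(Ff)(τ)| ≤ C_{μ,ν} ‖f‖_{1-ν,1}, where
C_{μ,ν} = (2^{-2ν}/(π√π)) B(1-ν,1-ν) ∫_{ν-i∞}^{ν+i∞} |Γ(3/2-s)Γ(1/2-s)Γ(s-μ)/Γ(1-s-μ)| |ds|
and ‖f‖_{1-ν,1} = ∫₀^∞ |f(x)| x^{-ν} dx. -/
theorem indexF_bounded (μ : ℂ) (hμ : μ.re < 1/2) (ν : ℝ) (hν : ν ∈ Set.Ioo μ.re (1/2 : ℝ))
    (f : ℝ → ℂ) (hfm : AEStronglyMeasurable f (volume.restrict (Set.Ioi 0)))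
    (hf : IntegrableOn (fun x : ℝ => ‖f x‖ * x ^ (-ν)) (Set.Ioi 0)) :
    (∀ τ > (0:ℝ), IntegrableOn (fun x : ℝ => PhiMB μ ν x τ * f x) (Set.Ioi 0)) ∧
    ∀ τ > (0:ℝ), ‖indexF μ ν f τ‖ ≤
      ((2:ℝ) ^ (-(2*ν)) / (Real.pi * Real.sqrt Real.pi)) *
        (Real.Gamma (1-ν) * Real.Gamma (1-ν) / Real.Gamma ((1-ν) + (1-ν))) *
        (∫ t : ℝ, ‖Complex.Gamma (3/2 - ((ν:ℂ) + t * Complex.I)) *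
            Complex.Gamma (1/2 - ((ν:ℂ) + t * Complex.I)) *
            Complex.Gamma (((ν:ℂ) + t * Complex.I) - μ) /
            Complex.Gamma (1 - ((ν:ℂ) + t * Complex.I) - μ)‖) *
        (∫ x in Set.Ioi (0:ℝ), ‖f x‖ * x ^ (-ν)) :=
  indexF_bounded_general μ ν hν f hfm hf
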